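/- arXiv:cs/0109006 — 4 statements merged into one kernel-verified Lean document; each statement's English description precedes it below -/
import Mathlib

section
/- For every extended logic program P, the belief set operator is idempotent: Bel(Bel(P)) = Bel(P). -/
/-- A literal over atoms `α`: an atom or a strongly negated atom. -/
inductive Lit (α : Type) where
  | pos : α → Lit α
  | neg : α → Lit α

/-- The complementary literal. -/
def Lit.compl {α : Type} : Lit α → Lit α
  | .pos a => .neg a
  | .neg a => .pos a

/-- A rule of an extended logic program: optional head literal,
prerequisites `prem`, and weakly negated body literals `nbody`. -/
structure Rule (α : Type) where
  head : Option (Lit α)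
  prem : Set (Lit α)
  nbody : Set (Lit α)

/-- A set of literals is consistent iff it contains no complementary pair. -/
def Consistent {α : Type} (S : Set (Lit α)) : Prop :=
  ∀ a : α, ¬ (Lit.pos a ∈ S ∧ Lit.neg a ∈ S)

/-- The body of `r` is true in `S`. -/
def BodyTrue {α : Type} (S : Set (Lit α)) (r : Rule α) : Prop :=
  r.prem ⊆ S ∧ ∀ L ∈ r.nbody, L ∉ S

/-- The head of `r` is true in `S` (false for constraints). -/
def HeadTrue {α : Type} (S : Set (Lit α)) (r : Rule α) : Prop :=
  ∃ L, r.head = some L ∧ L ∈ S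

/-- Rule `r` is true in `S`. -/
def RuleTrue {α : Type} (S : Set (Lit α)) (r : Rule α) : Prop :=
  BodyTrue S r → HeadTrue S r

/-- `S` is a model of program `P`. -/
def IsModel {α : Type} (S : Set (Lit α)) (P : Set (Rule α)) : Prop :=
  ∀ r ∈ P, RuleTrue S r

/-- `r` is defeated by `S`. -/
def Defeated {α : Type} (S : Set (Lit α)) (r : Rule α) : Prop :=
  ∃ L ∈ r.nbody, L ∈ S

/-- The Gelfond–Lifschitz reduct of `P` relative to `S`. -/
def Reduct {α : Type} (P : Set (Rule α)) (S : Set (Lit α)) : Set (Rule α) :=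
  { r' | ∃ r ∈ P, ¬ Defeated S r ∧ r' = Rule.mk r.head r.prem ∅ }

/-- `S` is an answer set of `P`: a consistent set of literals that is a
minimal model of the reduct `P^S`. -/
def IsAnswerSet {α : Type} (P : Set (Rule α)) (S : Set (Lit α)) : Prop :=
  Consistent S ∧ IsModel S (Reduct P S) ∧
    ∀ T ⊆ S, IsModel T (Reduct P S) → T = S

/-- The belief set of `P`: all rules true in every answer set of `P`. -/
def Bel {α : Type} (P : Set (Rule α)) : Set (Rule α) :=
  { r | ∀ S, IsAnswerSet P S → RuleTrue S r }


lemma subset_bel {α : Type} (Q : Set (Rule α)) : Q ⊆ Bel Q := by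
  intro r hr S hS hb
  have hnd : ¬ Defeated S r := by
    rintro ⟨L, hL, hLS⟩
    exact hb.2 L hL hLS
  have hr' : (Rule.mk r.head r.prem ∅) ∈ Reduct Q S := ⟨r, hr, hnd, rfl⟩
  have := hS.2.1 _ hr' ⟨hb.1, by intro L hL; exact absurd hL (Set.notMem_empty L)⟩
  exact this

lemma answer_set_bel {α : Type} {P : Set (Rule α)} {S : Set (Lit α)}
    (hS : IsAnswerSet P S) : IsAnswerSet (Bel P) S := by
  refine ⟨hS.1, ?_, ?_⟩
  · rintro r' ⟨r, hrBel, hnd, rfl⟩ hb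
    have hbr : BodyTrue S r := ⟨hb.1, fun L hL hLS => hnd ⟨L, hL, hLS⟩⟩
    obtain ⟨L, hL, hLS⟩ := hrBel S hS hbr
    exact ⟨L, hL, hLS⟩
  · intro T hTS hTM
    apply hS.2.2 T hTS
    rintro r' ⟨r, hrP, hnd, rfl⟩
    exact hTM _ ⟨r, subset_bel P hrP, hnd, rfl⟩

/-- the belief set operator is idempotent. -/
theorem bel_idempotent {α : Type} (P : Set (Rule α)) : Bel (Bel P) = Bel P := by
  ext r
  constructor
  · intro h S hS
    exact h S (answer_set_bel hS)
  · intro h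
    exact subset_bel (Bel P) h
end

section
/- Let P⃗ = (P_1,...,P_n) be an update sequence over atoms At and let S, T be answer sets of the update program P⃗_◁ over the extended alphabet At*. If S ∩ Lit_At = T ∩ Lit_At then S = T. -/
/-- Extended alphabet `At*`: original atoms, indexed copies `A_i`,
and rejection atoms `rej(r)` for (named copies of) rules. -/
inductive ExtAtom (α : Type) where
  | base : α → ExtAtom α
  | idx : ℕ → α → ExtAtom α
  | rej : ℕ → Rule α → ExtAtom α

/-- Lift a literal over `α` to the corresponding literal over `At*`. -/
def liftLit {α : Type} : Lit α → Lit (ExtAtom α)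
  | .pos a => .pos (.base a)
  | .neg a => .neg (.base a)

/-- The indexed copy `L_i` of a literal `L`. -/
def idxLit {α : Type} (i : ℕ) : Lit α → Lit (ExtAtom α)
  | .pos a => .pos (.idx i a)
  | .neg a => .neg (.idx i a)

/-- Literal `L` occurs in the update sequence `(P 0, …, P (n-1))`. -/
def OccursIn {α : Type} (n : ℕ) (P : ℕ → Set (Rule α)) (L : Lit α) : Prop :=
  ∃ i < n, ∃ r ∈ P i, r.head = some L ∨ L ∈ r.prem ∨ L ∈ r.nbody

/-- The update program `P_◁` of the update sequence `(P 0, …, P (n-1))`,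
an ELP over the extended alphabet `At*`. -/
def UpdProgram {α : Type} (n : ℕ) (P : ℕ → Set (Rule α)) : Set (Rule (ExtAtom α)) :=
  -- (i) all constraints
  { r' | ∃ i < n, ∃ r ∈ P i, r.head = none ∧
      r' = Rule.mk none (liftLit '' r.prem) (liftLit '' r.nbody) } ∪
  -- (ii)  L_i ← B(r), not rej(r)
  { r' | ∃ i < n, ∃ r ∈ P i, ∃ L, r.head = some L ∧
      r' = Rule.mk (some (idxLit i L)) (liftLit '' r.prem)
             ((liftLit '' r.nbody) ∪ {Lit.pos (ExtAtom.rej i r)}) } ∪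
  -- (iii)  rej(r) ← B(r), ¬L_{i+1}
  { r' | ∃ i, i + 1 < n ∧ ∃ r ∈ P i, ∃ L, r.head = some L ∧
      r' = Rule.mk (some (Lit.pos (ExtAtom.rej i r)))
             ((liftLit '' r.prem) ∪ {idxLit (i+1) L.compl}) (liftLit '' r.nbody) } ∪
  -- (iv) inertia rules  L_i ← L_{i+1}  and  L ← L_1
  { r' | ∃ L, OccursIn n P L ∧
      ((∃ i, i + 1 < n ∧ r' = Rule.mk (some (idxLit i L)) {idxLit (i+1) L} ∅) ∨
        r' = Rule.mk (some (liftLit L)) {idxLit 0 L} ∅) }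

/-- `S` is an update answer set of the sequence `(P 0, …, P (n-1))`:
the restriction to `Lit_At` of an answer set of the update program. -/
def UpdateAnswerSet {α : Type} (n : ℕ) (P : ℕ → Set (Rule α)) (S : Set (Lit α)) : Prop :=
  ∃ S' : Set (Lit (ExtAtom α)), IsAnswerSet (UpdProgram n P) S' ∧
    S = { L | liftLit L ∈ S' }

/-- Two rules are conflicting iff their heads are complementary literals. -/
def Conflicting {α : Type} (r r' : Rule α) : Prop :=
  ∃ L, r.head = some L ∧ r'.head = some L.compl

/-- The founded rejection set at level `i`: rules of `P i` rejected by a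
conflicting, itself non-rejected rule of some later program. -/
def RejLevel {α : Type} (n : ℕ) (P : ℕ → Set (Rule α)) (S : Set (Lit α)) (i : ℕ) :
    Set (Rule α) :=
  { r | r ∈ P i ∧ ∃ j, ∃ _ : i < j, ∃ _ : j < n, ∃ r',
      r' ∈ P j ∧ r' ∉ RejLevel n P S j ∧
      Conflicting r r' ∧ BodyTrue S r ∧ BodyTrue S r' }
  termination_by n - i
  decreasing_by omega

/-- The founded rejection set `Rej(S, P⃗)`. -/
def Rej {α : Type} (n : ℕ) (P : ℕ → Set (Rule α)) (S : Set (Lit α)) : Set (Rule α) :=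
  { r | ∃ i < n, r ∈ RejLevel n P S i }

/-- The union `∪P⃗` of all rules of the sequence. -/
def UnionSeq {α : Type} (n : ℕ) (P : ℕ → Set (Rule α)) : Set (Rule α) :=
  { r | ∃ i < n, r ∈ P i }

section Aux

variable {α : Type}

lemma support {P : Set (Rule α)} {S : Set (Lit α)}
    (hS : IsAnswerSet P S) {L : Lit α} (hL : L ∈ S) :
    ∃ r ∈ P, ¬ Defeated S r ∧ r.head = some L ∧ r.prem ⊆ S := by
  by_contra hcon
  push_neg at hcon
  have hmod : IsModel (S \ {L}) (Reduct P S) := by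
    rintro r' ⟨r, hrP, hnd, rfl⟩ hbody
    have hprem : r.prem ⊆ S := fun x hx => (hbody.1 hx).1
    have hhead : HeadTrue S (Rule.mk r.head r.prem ∅) :=
      hS.2.1 _ ⟨r, hrP, hnd, rfl⟩ ⟨hprem, by simp⟩
    obtain ⟨L', hL', hLS⟩ := hhead
    refine ⟨L', hL', hLS, ?_⟩
    intro hEq
    simp only [Set.mem_singleton_iff] at hEq
    subst hEq
    exact hcon r hrP hnd hL' hprem
  have heq := hS.2.2 _ Set.diff_subset hmod
  rw [← heq] at hL
  simp at hL

lemma mem_iff {P : Set (Rule α)} {S : Set (Lit α)} (hS : IsAnswerSet P S) (L : Lit α) :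
    L ∈ S ↔ ∃ r ∈ P, ¬ Defeated S r ∧ r.head = some L ∧ r.prem ⊆ S := by
  constructor
  · exact fun h => support hS h
  · rintro ⟨r, hrP, hnd, hh, hp⟩
    obtain ⟨L', hL', hLS⟩ := hS.2.1 _ ⟨r, hrP, hnd, rfl⟩ ⟨hp, by simp⟩
    have hLL : some L = some L' := hh.symm.trans hL'
    obtain rfl := Option.some.inj hLL
    exact hLS

variable {n : ℕ} {P : ℕ → Set (Rule α)} {S T : Set (Lit (ExtAtom α))}

lemma neg_rej_notMem (hS : IsAnswerSet (UpdProgram n P) S)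
    (i : ℕ) (r : Rule α) : Lit.neg (ExtAtom.rej i r) ∉ S := by
  intro hmem
  obtain ⟨r', hr', hnd, hh, hp⟩ := support hS hmem
  rcases hr' with ((h1 | h2) | h3) | h4
  · obtain ⟨i₂, _, r₂, _, hhn, rfl⟩ := h1; simp at hh
  · obtain ⟨i₂, _, r₂, _, L, _, rfl⟩ := h2; cases L <;> simp [idxLit] at hh
  · obtain ⟨i₂, _, r₂, _, L, _, rfl⟩ := h3; simp at hh
  · obtain ⟨L, _, (⟨i₂, _, rfl⟩ | rfl)⟩ := h4 <;> cases L <;> simp [idxLit, liftLit] at hh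

lemma idx_notMem_of_ge (hS : IsAnswerSet (UpdProgram n P) S)
    {i : ℕ} (hi : n ≤ i) (L : Lit α) : idxLit i L ∉ S := by
  intro hmem
  obtain ⟨r', hr', hnd, hh, hp⟩ := support hS hmem
  rcases hr' with ((h1 | h2) | h3) | h4
  · obtain ⟨i₂, _, r₂, _, hhn, rfl⟩ := h1; simp at hh
  · obtain ⟨i₂, hi₂, r₂, _, L₂, _, rfl⟩ := h2
    cases L <;> cases L₂ <;> simp [idxLit] at hh <;> omega
  · obtain ⟨i₂, _, r₂, _, L₂, _, rfl⟩ := h3; cases L <;> simp [idxLit] at hh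
  · obtain ⟨L₂, _, (⟨i₂, hi₂, rfl⟩ | rfl)⟩ := h4 <;> cases L <;> cases L₂ <;>
      simp [idxLit, liftLit] at hh <;> omega

lemma rej_notMem_of_ge (hS : IsAnswerSet (UpdProgram n P) S)
    {i : ℕ} (hi : n ≤ i + 1) (r : Rule α) : Lit.pos (ExtAtom.rej i r) ∉ S := by
  intro hmem
  obtain ⟨r', hr', hnd, hh, hp⟩ := support hS hmem
  rcases hr' with ((h1 | h2) | h3) | h4
  · obtain ⟨i₂, _, r₂, _, hhn, rfl⟩ := h1; simp at hh
  · obtain ⟨i₂, _, r₂, _, L₂, _, rfl⟩ := h2; cases L₂ <;> simp [idxLit] at hh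
  · obtain ⟨i₂, hi₂, r₂, _, L₂, _, rfl⟩ := h3
    simp at hh; omega
  · obtain ⟨L₂, _, (⟨i₂, _, rfl⟩ | rfl)⟩ := h4 <;> cases L₂ <;>
      simp [idxLit, liftLit] at hh

lemma rej_transfer (hS : IsAnswerSet (UpdProgram n P) S) (hT : IsAnswerSet (UpdProgram n P) T)
    (hbase : ∀ L : Lit α, liftLit L ∈ S ↔ liftLit L ∈ T)
    (i : ℕ) (hidx1 : ∀ L : Lit α, idxLit (i+1) L ∈ S ↔ idxLit (i+1) L ∈ T)
    (r0 : Rule α) (hmem : Lit.pos (ExtAtom.rej i r0) ∈ S) :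
    Lit.pos (ExtAtom.rej i r0) ∈ T := by
  obtain ⟨r', hr', hnd, hh, hp⟩ := support hS hmem
  rcases hr' with ((h1 | h2) | h3) | h4
  · obtain ⟨i₂, _, r₂, _, hhn, rfl⟩ := h1; simp at hh
  · obtain ⟨i₂, _, r₂, _, L₂, _, rfl⟩ := h2; cases L₂ <;> simp [idxLit] at hh
  · obtain ⟨i₂, hi₂, r₂, hr₂P, L, hLh, rfl⟩ := h3
    simp only [Option.some.injEq, Lit.pos.injEq, ExtAtom.rej.injEq] at hh
    obtain ⟨rfl, rfl⟩ := hh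
    refine (mem_iff hT _).2 ⟨_, Or.inl (Or.inr ⟨i₂, hi₂, r₂, hr₂P, L, hLh, rfl⟩), ?_, rfl, ?_⟩
    · rintro ⟨x, ⟨y, hy, rfl⟩, hxT⟩
      exact hnd ⟨_, ⟨y, hy, rfl⟩, (hbase y).2 hxT⟩
    · rintro x (⟨y, hy, rfl⟩ | hx)
      · exact (hbase y).1 (hp (Or.inl ⟨y, hy, rfl⟩))
      · simp only [Set.mem_singleton_iff] at hx
        subst hx
        exact (hidx1 L.compl).1 (hp (Or.inr rfl))
  · obtain ⟨L₂, _, (⟨i₂, _, rfl⟩ | rfl)⟩ := h4 <;> cases L₂ <;>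
      simp [idxLit, liftLit] at hh

lemma idx_transfer (hS : IsAnswerSet (UpdProgram n P) S) (hT : IsAnswerSet (UpdProgram n P) T)
    (hbase : ∀ L : Lit α, liftLit L ∈ S ↔ liftLit L ∈ T)
    (i : ℕ) (hidx1 : ∀ L : Lit α, idxLit (i+1) L ∈ S ↔ idxLit (i+1) L ∈ T)
    (hrej : ∀ r : Rule α, Lit.pos (ExtAtom.rej i r) ∈ S ↔ Lit.pos (ExtAtom.rej i r) ∈ T)
    (L0 : Lit α) (hmem : idxLit i L0 ∈ S) :
    idxLit i L0 ∈ T := by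
  obtain ⟨r', hr', hnd, hh, hp⟩ := support hS hmem
  rcases hr' with ((h1 | h2) | h3) | h4
  · obtain ⟨i₂, _, r₂, _, hhn, rfl⟩ := h1; cases L0 <;> simp [idxLit] at hh
  · obtain ⟨i₂, hi₂, r₂, hr₂P, L, hLh, rfl⟩ := h2
    have hiL : i₂ = i ∧ L = L0 := by
      cases L <;> cases L0 <;> simp [idxLit] at hh <;> simp_all [idxLit]
    obtain ⟨rfl, rfl⟩ := hiL
    refine (mem_iff hT _).2 ⟨_, Or.inl (Or.inl (Or.inr ⟨i₂, hi₂, r₂, hr₂P, L, hLh, rfl⟩)), ?_, rfl, ?_⟩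
    · rintro ⟨x, (⟨y, hy, rfl⟩ | hx), hxT⟩
      · exact hnd ⟨_, Or.inl ⟨y, hy, rfl⟩, (hbase y).2 hxT⟩
      · simp only [Set.mem_singleton_iff] at hx
        subst hx
        exact hnd ⟨_, Or.inr rfl, (hrej r₂).2 hxT⟩
    · rintro x ⟨y, hy, rfl⟩
      exact (hbase y).1 (hp ⟨y, hy, rfl⟩)
  · obtain ⟨i₂, _, r₂, _, L₂, _, rfl⟩ := h3; cases L0 <;> simp [idxLit] at hh
  · obtain ⟨L, hOcc, (⟨i₂, hi₂, rfl⟩ | rfl)⟩ := h4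
    · have hiL : i₂ = i ∧ L = L0 := by
        cases L <;> cases L0 <;> simp [idxLit] at hh <;> simp_all [idxLit]
      obtain ⟨rfl, rfl⟩ := hiL
      refine (mem_iff hT _).2 ⟨_, Or.inr ⟨L, hOcc, Or.inl ⟨i₂, hi₂, rfl⟩⟩, ?_, rfl, ?_⟩
      · rintro ⟨x, hx, -⟩; exact hx.elim
      · rintro x hx
        simp only [Set.mem_singleton_iff] at hx
        subst hx
        exact (hidx1 L).1 (hp rfl)
    · cases L <;> cases L0 <;> simp [idxLit, liftLit] at hh

lemma claim (hS : IsAnswerSet (UpdProgram n P) S) (hT : IsAnswerSet (UpdProgram n P) T)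
    (hbase : ∀ L : Lit α, liftLit L ∈ S ↔ liftLit L ∈ T) :
    ∀ k i, n ≤ i + k →
      (∀ L : Lit α, (idxLit i L ∈ S ↔ idxLit i L ∈ T)) ∧
      (∀ r : Rule α, (Lit.pos (ExtAtom.rej i r) ∈ S ↔ Lit.pos (ExtAtom.rej i r) ∈ T)) := by
  intro k
  induction k with
  | zero =>
    intro i hi
    constructor
    · intro L
      have h1 := idx_notMem_of_ge (i := i) hS (by omega) L
      have h2 := idx_notMem_of_ge (i := i) hT (by omega) L
      simp [h1, h2]
    · intro r
      have h1 := rej_notMem_of_ge (i := i) hS (by omega) r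
      have h2 := rej_notMem_of_ge (i := i) hT (by omega) r
      simp [h1, h2]
  | succ k ih =>
    intro i hi
    have hidx1 : ∀ L : Lit α, idxLit (i+1) L ∈ S ↔ idxLit (i+1) L ∈ T :=
      (ih (i+1) (by omega)).1
    have hrej : ∀ r : Rule α,
        Lit.pos (ExtAtom.rej i r) ∈ S ↔ Lit.pos (ExtAtom.rej i r) ∈ T := fun r =>
      ⟨rej_transfer hS hT hbase i hidx1 r,
       rej_transfer hT hS (fun L => (hbase L).symm) i (fun L => (hidx1 L).symm) r⟩
    refine ⟨fun L => ⟨idx_transfer hS hT hbase i hidx1 hrej L,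
      idx_transfer hT hS (fun L => (hbase L).symm) i (fun L => (hidx1 L).symm)
        (fun r => (hrej r).symm) L⟩, hrej⟩

end Aux

/-- answer sets of the update program are uniquely determined
by their restriction to the literals over the original alphabet. -/
theorem updProgram_answer_set_unique {α : Type} (n : ℕ) (P : ℕ → Set (Rule α))
    (S T : Set (Lit (ExtAtom α)))
    (hS : IsAnswerSet (UpdProgram n P) S) (hT : IsAnswerSet (UpdProgram n P) T)
    (h : S ∩ Set.range (liftLit (α := α)) = T ∩ Set.range (liftLit (α := α))) :
    S = T := by
  have hbase : ∀ L : Lit α, liftLit L ∈ S ↔ liftLit L ∈ T := by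
    intro L
    constructor <;> intro hm
    · have hx : liftLit L ∈ S ∩ Set.range (liftLit (α := α)) := ⟨hm, ⟨L, rfl⟩⟩
      rw [h] at hx; exact hx.1
    · have hx : liftLit L ∈ T ∩ Set.range (liftLit (α := α)) := ⟨hm, ⟨L, rfl⟩⟩
      rw [← h] at hx; exact hx.1
  ext x
  cases x with
  | pos a =>
    cases a with
    | base b => exact hbase (.pos b)
    | idx i b => exact (claim hS hT hbase n i (by omega)).1 (.pos b)
    | rej i r => exact (claim hS hT hbase n i (by omega)).2 r
  | neg a =>
    cases a with
    | base b => exact hbase (.neg b)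
    | idx i b => exact (claim hS hT hbase n i (by omega)).1 (.neg b)
    | rej i r =>
      constructor <;> intro hx
      · exact absurd hx (neg_rej_notMem hS i r)
      · exact absurd hx (neg_rej_notMem hT i r)
end

section
/- If an update sequence consists of a single program P_1, then the update answer sets of the sequence coincide exactly with the ordinary answer sets of P_1. -/
/-!
For a single program the update program `P⃗_◁` has no rejection rules (iii) and no inertia rules
between levels, so no `rej` atom can be derived and the default negations `not rej(r)` are
always satisfied. What remains is `P_1` (here `P 0`) with each head `L` replaced by its copy
`L_0`, followed by the inertia rules `L ← L_0`. Hence the answer sets of `P⃗_◁` are exactly the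
sets `S ∪ {L_0 | L ∈ S}` for the answer sets `S` of `P_1`. That every answer set of `P⃗_◁` has
this shape follows from supportedness: each literal of an answer set is the head of an undefeated
rule whose prerequisites hold, so no `rej` atom occurs and `L` is present exactly when `L_0` is.
-/

section AnswerSets

variable {α : Type} {Q : Set (Rule α)} {S T : Set (Lit α)}

theorem isModel_reduct_iff :
    IsModel T (Reduct Q S) ↔ ∀ r ∈ Q, ¬ Defeated S r → r.prem ⊆ T → HeadTrue T r := by
  constructor
  · intro h r hr hnd hprem
    exact h ⟨r.head, r.prem, ∅⟩ ⟨r, hr, hnd, rfl⟩ ⟨hprem, fun _ h => h.elim⟩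
  · rintro h _ ⟨r, hr, hnd, rfl⟩ ⟨hprem, -⟩
    exact h r hr hnd hprem

theorem IsAnswerSet.exists_supporting_rule (h : IsAnswerSet Q S) {M : Lit α} (hM : M ∈ S) :
    ∃ r ∈ Q, ¬ Defeated S r ∧ r.prem ⊆ S ∧ r.head = some M := by
  obtain ⟨-, hmod, hmin⟩ := h
  set T := {M ∈ S | ∃ r ∈ Q, ¬ Defeated S r ∧ r.prem ⊆ S ∧ r.head = some M}
  have hT : IsModel T (Reduct Q S) := by
    refine isModel_reduct_iff.mpr fun r hr hnd hprem => ?_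
    have hpremS : r.prem ⊆ S := hprem.trans (Set.sep_subset _ _)
    obtain ⟨N, hN, hNS⟩ := isModel_reduct_iff.mp hmod r hr hnd hpremS
    exact ⟨N, hN, hNS, r, hr, hnd, hpremS, hN⟩
  have hTS : T = S := hmin T (Set.sep_subset _ _) hT
  exact (hTS ▸ hM : M ∈ T).2

end AnswerSets

section Literals

variable {α : Type}

theorem liftLit_injective : Function.Injective (liftLit : Lit α → Lit (ExtAtom α)) := by
  intro L M h
  cases L <;> cases M <;> simp_all [liftLit]

@[simp]
theorem liftLit_ne_idxLit {i : ℕ} {L M : Lit α} : liftLit L ≠ idxLit i M := by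
  cases L <;> cases M <;> simp [liftLit, idxLit]

@[simp]
theorem idxLit_ne_liftLit {i : ℕ} {L M : Lit α} : idxLit i L ≠ liftLit M :=
  liftLit_ne_idxLit.symm

end Literals

section SingleProgram

variable {α : Type}

def liftWithCopy (S : Set (Lit α)) : Set (Lit (ExtAtom α)) :=
  liftLit '' S ∪ idxLit 0 '' S

variable {S T : Set (Lit α)} {L : Lit α}

@[simp]
theorem liftLit_mem_liftWithCopy : liftLit L ∈ liftWithCopy S ↔ L ∈ S := by
  simp [liftWithCopy, liftLit_injective.eq_iff]

@[simp]
theorem idxLit_mem_liftWithCopy {i : ℕ} : idxLit i L ∈ liftWithCopy S ↔ i = 0 ∧ L ∈ S := by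
  constructor
  · rintro (⟨M, -, h⟩ | ⟨M, hM, h⟩)
    · exact absurd h liftLit_ne_idxLit
    · cases M <;> cases L <;> cases h <;> exact ⟨rfl, hM⟩
  · rintro ⟨rfl, hL⟩
    exact Or.inr ⟨L, hL, rfl⟩

theorem rej_not_mem_liftWithCopy {i : ℕ} {r : Rule α} :
    Lit.pos (ExtAtom.rej i r) ∉ liftWithCopy S := by
  rintro (⟨L, -, h⟩ | ⟨L, -, h⟩) <;> cases L <;> cases h

@[simp]
theorem preimage_liftWithCopy : liftLit ⁻¹' liftWithCopy S = S :=
  Set.ext fun _ => liftLit_mem_liftWithCopy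

@[simp]
theorem preimage_idxLit_liftWithCopy : idxLit 0 ⁻¹' liftWithCopy S = S :=
  Set.ext fun _ => idxLit_mem_liftWithCopy.trans (and_iff_right rfl)

theorem liftWithCopy_subset_iff : liftWithCopy T ⊆ liftWithCopy S ↔ T ⊆ S := by
  refine ⟨fun h L hL => ?_, fun h => Set.union_subset_union (Set.image_mono h) (Set.image_mono h)⟩
  exact liftLit_mem_liftWithCopy.mp (h (liftLit_mem_liftWithCopy.mpr hL))

theorem consistent_liftWithCopy_iff : Consistent (liftWithCopy S) ↔ Consistent S := by
  refine ⟨fun h a ha => h (.base a) ?_, fun h a ha => ?_⟩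
  · exact ha.imp liftLit_mem_liftWithCopy.mpr liftLit_mem_liftWithCopy.mpr
  · obtain ⟨hpos, hneg⟩ := ha
    cases a with
    | base b => exact h b ⟨liftLit_mem_liftWithCopy.mp hpos, liftLit_mem_liftWithCopy.mp hneg⟩
    | idx i b =>
      exact h b ⟨(idxLit_mem_liftWithCopy (L := .pos b)).mp hpos |>.2,
        (idxLit_mem_liftWithCopy (L := .neg b)).mp hneg |>.2⟩
    | rej i r => exact rej_not_mem_liftWithCopy hpos

/-- Rule (i) of `P⃗_◁`. -/
def liftConstraint (r : Rule α) : Rule (ExtAtom α) :=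
  ⟨none, liftLit '' r.prem, liftLit '' r.nbody⟩

/-- Rule (ii) of `P⃗_◁`, `L_0 ← B(r), not rej(r)`. -/
def indexedRule (r : Rule α) (L : Lit α) : Rule (ExtAtom α) :=
  ⟨some (idxLit 0 L), liftLit '' r.prem, liftLit '' r.nbody ∪ {Lit.pos (ExtAtom.rej 0 r)}⟩

/-- Rule (iv) of `P⃗_◁`, `L ← L_0`. -/
def inertiaRule (L : Lit α) : Rule (ExtAtom α) :=
  ⟨some (liftLit L), {idxLit 0 L}, ∅⟩

variable {P : ℕ → Set (Rule α)} {r' : Rule (ExtAtom α)}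

theorem mem_updProgram_one :
    r' ∈ UpdProgram 1 P ↔
      (∃ r ∈ P 0, r.head = none ∧ r' = liftConstraint r) ∨
      (∃ r ∈ P 0, ∃ L, r.head = some L ∧ r' = indexedRule r L) ∨
      (∃ L, OccursIn 1 P L ∧ r' = inertiaRule L) := by
  constructor
  · rintro (((⟨i, hi, h⟩ | ⟨i, hi, h⟩) | ⟨i, hi, -⟩) | ⟨L, hL, ⟨i, hi, -⟩ | h⟩)
    · obtain rfl : i = 0 := Nat.lt_one_iff.mp hi
      exact Or.inl h
    · obtain rfl : i = 0 := Nat.lt_one_iff.mp hi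
      exact Or.inr (Or.inl h)
    all_goals first | omega | exact Or.inr (Or.inr ⟨L, hL, h⟩)
  · rintro (h | h | ⟨L, hL, h⟩)
    · exact Or.inl (Or.inl (Or.inl ⟨0, one_pos, h⟩))
    · exact Or.inl (Or.inl (Or.inr ⟨0, one_pos, h⟩))
    · exact Or.inr ⟨L, hL, Or.inr h⟩

theorem liftConstraint_mem {r : Rule α} (hr : r ∈ P 0) (hh : r.head = none) :
    liftConstraint r ∈ UpdProgram 1 P :=
  mem_updProgram_one.mpr (Or.inl ⟨r, hr, hh, rfl⟩)

theorem indexedRule_mem {r : Rule α} (hr : r ∈ P 0) (hh : r.head = some L) :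
    indexedRule r L ∈ UpdProgram 1 P :=
  mem_updProgram_one.mpr (Or.inr (Or.inl ⟨r, hr, L, hh, rfl⟩))

theorem inertiaRule_mem {r : Rule α} (hr : r ∈ P 0) (hh : r.head = some L) :
    inertiaRule L ∈ UpdProgram 1 P :=
  mem_updProgram_one.mpr (Or.inr (Or.inr ⟨L, ⟨0, one_pos, r, hr, Or.inl hh⟩, rfl⟩))

variable {X : Set (Lit (ExtAtom α))} {r : Rule α}

theorem defeated_liftConstraint_iff : Defeated X (liftConstraint r) ↔ Defeated (liftLit ⁻¹' X) r :=
  Set.exists_mem_image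

theorem defeated_indexedRule_iff (hX : Lit.pos (ExtAtom.rej 0 r) ∉ X) :
    Defeated X (indexedRule r L) ↔ Defeated (liftLit ⁻¹' X) r := by
  simp [Defeated, indexedRule, hX]

theorem not_defeated_inertiaRule : ¬ Defeated X (inertiaRule L) :=
  fun ⟨_, h, _⟩ => h

theorem not_headTrue_liftConstraint : ¬ HeadTrue X (liftConstraint r) :=
  fun ⟨_, h, _⟩ => nomatch h

@[simp]
theorem headTrue_indexedRule_iff : HeadTrue X (indexedRule r L) ↔ idxLit 0 L ∈ X := by
  simp [HeadTrue, indexedRule]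

@[simp]
theorem headTrue_inertiaRule_iff : HeadTrue X (inertiaRule L) ↔ liftLit L ∈ X := by
  simp [HeadTrue, inertiaRule]

theorem headTrue_iff_of_head_eq {U : Set (Lit α)} (hh : r.head = some L) :
    HeadTrue U r ↔ L ∈ U := by
  simp [HeadTrue, hh]

theorem image_liftLit_subset_liftWithCopy_iff {s : Set (Lit α)} :
    liftLit '' s ⊆ liftWithCopy T ↔ s ⊆ T := by
  rw [Set.image_subset_iff, preimage_liftWithCopy]

theorem IsModel.to_updProgram_one (hT : IsModel T (Reduct (P 0) S)) :
    IsModel (liftWithCopy T) (Reduct (UpdProgram 1 P) (liftWithCopy S)) := by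
  rw [isModel_reduct_iff] at hT ⊢
  intro r' hr' hnd hprem
  rcases mem_updProgram_one.mp hr' with ⟨r, hr, hh, rfl⟩ | ⟨r, hr, L, hh, rfl⟩ | ⟨L, -, rfl⟩
  · rw [defeated_liftConstraint_iff, preimage_liftWithCopy] at hnd
    have := hT r hr hnd (image_liftLit_subset_liftWithCopy_iff.mp hprem)
    simp [HeadTrue, hh] at this
  · rw [defeated_indexedRule_iff rej_not_mem_liftWithCopy, preimage_liftWithCopy] at hnd
    have hL := hT r hr hnd (image_liftLit_subset_liftWithCopy_iff.mp hprem)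
    rw [headTrue_indexedRule_iff, idxLit_mem_liftWithCopy]
    exact ⟨rfl, (headTrue_iff_of_head_eq hh).mp hL⟩
  · have hL : idxLit 0 L ∈ liftWithCopy T := hprem rfl
    rw [idxLit_mem_liftWithCopy] at hL
    rw [headTrue_inertiaRule_iff, liftLit_mem_liftWithCopy]
    exact hL.2

theorem IsModel.of_updProgram_one (hX : IsModel X (Reduct (UpdProgram 1 P) (liftWithCopy S))) :
    IsModel (liftLit ⁻¹' X ∩ idxLit 0 ⁻¹' X) (Reduct (P 0) S) := by
  rw [isModel_reduct_iff] at hX ⊢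
  intro r hr hnd hprem
  have hprem' : liftLit '' r.prem ⊆ X :=
    Set.image_subset_iff.mpr (hprem.trans Set.inter_subset_left)
  rcases hh : r.head with _ | L
  · refine absurd (hX _ (liftConstraint_mem hr hh) ?_ hprem') not_headTrue_liftConstraint
    rwa [defeated_liftConstraint_iff, preimage_liftWithCopy]
  · have hnd' : ¬ Defeated (liftWithCopy S) (indexedRule r L) := by
      rwa [defeated_indexedRule_iff rej_not_mem_liftWithCopy, preimage_liftWithCopy]
    have hidx : idxLit 0 L ∈ X :=
      headTrue_indexedRule_iff.mp (hX _ (indexedRule_mem hr hh) hnd' hprem')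
    have hlift : liftLit L ∈ X := headTrue_inertiaRule_iff.mp
      (hX _ (inertiaRule_mem hr hh) not_defeated_inertiaRule (Set.singleton_subset_iff.mpr hidx))
    exact (headTrue_iff_of_head_eq hh).mpr ⟨hlift, hidx⟩

theorem isModel_reduct_liftWithCopy_iff :
    IsModel (liftWithCopy T) (Reduct (UpdProgram 1 P) (liftWithCopy S)) ↔
      IsModel T (Reduct (P 0) S) :=
  ⟨fun h => by simpa using h.of_updProgram_one, IsModel.to_updProgram_one⟩

theorem isAnswerSet_liftWithCopy_iff :
    IsAnswerSet (UpdProgram 1 P) (liftWithCopy S) ↔ IsAnswerSet (P 0) S := by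
  refine and_congr consistent_liftWithCopy_iff (and_congr isModel_reduct_liftWithCopy_iff ?_)
  constructor
  · intro hmin T hTS hT
    have := hmin _ (liftWithCopy_subset_iff.mpr hTS) (isModel_reduct_liftWithCopy_iff.mpr hT)
    simpa using congrArg (liftLit ⁻¹' ·) this
  · intro hmin X hXS hX
    have hcore := hmin _ (fun L hL => liftLit_mem_liftWithCopy.mp (hXS hL.1))
      hX.of_updProgram_one
    refine hXS.antisymm (Set.union_subset ?_ ?_) <;> rintro _ ⟨L, hL, rfl⟩
    exacts [(hcore ▸ hL).1, (hcore ▸ hL).2]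

theorem IsAnswerSet.eq_liftWithCopy {S' : Set (Lit (ExtAtom α))}
    (h : IsAnswerSet (UpdProgram 1 P) S') : S' = liftWithCopy (liftLit ⁻¹' S') := by
  refine Set.ext fun M => ⟨fun hM => ?_, ?_⟩
  · obtain ⟨r', hr', -, -, hhead⟩ := h.exists_supporting_rule hM
    rcases mem_updProgram_one.mp hr' with ⟨r, -, -, rfl⟩ | ⟨r, hr, L, hh, rfl⟩ | ⟨L, -, rfl⟩
    · cases hhead
    · cases hhead
      have hlift := isModel_reduct_iff.mp h.2.1 _ (inertiaRule_mem hr hh) not_defeated_inertiaRule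
        (Set.singleton_subset_iff.mpr hM)
      exact Or.inr ⟨L, headTrue_inertiaRule_iff.mp hlift, rfl⟩
    · cases hhead
      exact Or.inl ⟨L, hM, rfl⟩
  · rintro (⟨L, hL, rfl⟩ | ⟨L, hL, rfl⟩)
    · exact hL
    obtain ⟨r', hr', -, hprem, hhead⟩ := h.exists_supporting_rule hL
    rcases mem_updProgram_one.mp hr' with ⟨r, -, -, rfl⟩ | ⟨r, -, L', -, rfl⟩ | ⟨L', -, rfl⟩
    · cases hhead
    · exact absurd (Option.some.inj hhead) idxLit_ne_liftLit
    · obtain rfl := liftLit_injective (Option.some.inj hhead)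
      exact hprem rfl

end SingleProgram

/-- for a single-program update sequence, update answer sets
coincide with ordinary answer sets. -/
theorem updateAnswerSet_single {α : Type} (P : ℕ → Set (Rule α)) (S : Set (Lit α)) :
    UpdateAnswerSet 1 P S ↔ IsAnswerSet (P 0) S := by
  constructor
  · rintro ⟨S', hS', rfl⟩
    rw [hS'.eq_liftWithCopy] at hS'
    exact isAnswerSet_liftWithCopy_iff.mp hS'
  · intro hS
    exact ⟨liftWithCopy S, isAnswerSet_liftWithCopy_iff.mpr hS, preimage_liftWithCopy.symm⟩
end

section
/- Update answer sets satisfy postulate (C4): if some update answer set S of (P⃗, P) satisfies every rule of P', then S is also an update answer set of (P⃗, P', P) (and in particular satisfies P'). -/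
/-- Append one program to a sequence of length `n`. -/
def append1 {α : Type} (n : ℕ) (P : ℕ → Set (Rule α)) (Q : Set (Rule α)) :
    ℕ → Set (Rule α) :=
  fun i => if i < n then P i else Q

/-- Append two programs to a sequence of length `n`. -/
def append2 {α : Type} (n : ℕ) (P : ℕ → Set (Rule α)) (Q R : Set (Rule α)) :
    ℕ → Set (Rule α) :=
  fun i => if i < n then P i else if i = n then Q else R

namespace C4aux

variable {α : Type}

/-! ### Basic shape lemmas -/

lemma lift_eq_lift {L M : Lit α} : liftLit L = liftLit M ↔ L = M := by
  cases L <;> cases M <;> simp [liftLit]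

lemma idx_eq_idx {j k : ℕ} {L M : Lit α} :
    idxLit j L = idxLit k M ↔ j = k ∧ L = M := by
  cases L <;> cases M <;> simp [idxLit]

lemma lift_ne_idx {L M : Lit α} {j : ℕ} : liftLit L ≠ idxLit j M := by
  cases L <;> cases M <;> simp [liftLit, idxLit]

lemma lift_ne_posrej {L : Lit α} {i : ℕ} {r : Rule α} :
    liftLit L ≠ Lit.pos (ExtAtom.rej i r) := by
  cases L <;> simp [liftLit]

lemma lift_ne_negrej {L : Lit α} {i : ℕ} {r : Rule α} :
    liftLit L ≠ Lit.neg (ExtAtom.rej i r) := by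
  cases L <;> simp [liftLit]

lemma idx_ne_posrej {L : Lit α} {j i : ℕ} {r : Rule α} :
    idxLit j L ≠ Lit.pos (ExtAtom.rej i r) := by
  cases L <;> simp [idxLit]

lemma idx_ne_negrej {L : Lit α} {j i : ℕ} {r : Rule α} :
    idxLit j L ≠ Lit.neg (ExtAtom.rej i r) := by
  cases L <;> simp [idxLit]

lemma posrej_eq_posrej {i i' : ℕ} {r r' : Rule α} :
    (Lit.pos (ExtAtom.rej i r) : Lit (ExtAtom α)) = Lit.pos (ExtAtom.rej i' r') ↔
      i = i' ∧ r = r' := by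
  simp [ExtAtom.rej.injEq]

lemma compl_compl (L : Lit α) : L.compl.compl = L := by cases L <;> rfl

lemma consistent_pair {S : Set (Lit α)} (hC : Consistent S) {L : Lit α}
    (h1 : L ∈ S) (h2 : L.compl ∈ S) : False := by
  cases L with
  | pos a => exact hC a ⟨h1, h2⟩
  | neg a => exact hC a ⟨h2, h1⟩

/-! ### UpdProgram membership -/

lemma mem_upd_i {m : ℕ} {Pq : ℕ → Set (Rule α)} {i : ℕ} {r : Rule α}
    (hi : i < m) (hr : r ∈ Pq i) (hh : r.head = none) :
    (Rule.mk none (liftLit '' r.prem) (liftLit '' r.nbody) : Rule (ExtAtom α)) ∈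
      UpdProgram m Pq :=
  Set.mem_union_left _ (Set.mem_union_left _ (Set.mem_union_left _
    ⟨i, hi, r, hr, hh, rfl⟩))

lemma mem_upd_ii {m : ℕ} {Pq : ℕ → Set (Rule α)} {i : ℕ} {r : Rule α} {L : Lit α}
    (hi : i < m) (hr : r ∈ Pq i) (hh : r.head = some L) :
    (Rule.mk (some (idxLit i L)) (liftLit '' r.prem)
      ((liftLit '' r.nbody) ∪ {Lit.pos (ExtAtom.rej i r)}) : Rule (ExtAtom α)) ∈
      UpdProgram m Pq :=
  Set.mem_union_left _ (Set.mem_union_left _ (Set.mem_union_right _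
    ⟨i, hi, r, hr, L, hh, rfl⟩))

lemma mem_upd_iii {m : ℕ} {Pq : ℕ → Set (Rule α)} {i : ℕ} {r : Rule α} {L : Lit α}
    (hi : i + 1 < m) (hr : r ∈ Pq i) (hh : r.head = some L) :
    (Rule.mk (some (Lit.pos (ExtAtom.rej i r)))
      ((liftLit '' r.prem) ∪ {idxLit (i+1) L.compl}) (liftLit '' r.nbody) :
      Rule (ExtAtom α)) ∈ UpdProgram m Pq :=
  Set.mem_union_left _ (Set.mem_union_right _ ⟨i, hi, r, hr, L, hh, rfl⟩)

lemma mem_upd_inertia {m : ℕ} {Pq : ℕ → Set (Rule α)} {i : ℕ} {L : Lit α}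
    (hocc : OccursIn m Pq L) (hi : i + 1 < m) :
    (Rule.mk (some (idxLit i L)) {idxLit (i+1) L} ∅ : Rule (ExtAtom α)) ∈
      UpdProgram m Pq :=
  Set.mem_union_right _ ⟨L, hocc, Or.inl ⟨i, hi, rfl⟩⟩

lemma mem_upd_base {m : ℕ} {Pq : ℕ → Set (Rule α)} {L : Lit α}
    (hocc : OccursIn m Pq L) :
    (Rule.mk (some (liftLit L)) {idxLit 0 L} ∅ : Rule (ExtAtom α)) ∈
      UpdProgram m Pq :=
  Set.mem_union_right _ ⟨L, hocc, Or.inr rfl⟩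

lemma upd_cases {m : ℕ} {Pq : ℕ → Set (Rule α)} {r' : Rule (ExtAtom α)}
    (h : r' ∈ UpdProgram m Pq) :
    (∃ i < m, ∃ r ∈ Pq i, r.head = none ∧
      r' = Rule.mk none (liftLit '' r.prem) (liftLit '' r.nbody)) ∨
    (∃ i < m, ∃ r ∈ Pq i, ∃ L, r.head = some L ∧
      r' = Rule.mk (some (idxLit i L)) (liftLit '' r.prem)
             ((liftLit '' r.nbody) ∪ {Lit.pos (ExtAtom.rej i r)})) ∨
    (∃ i, i + 1 < m ∧ ∃ r ∈ Pq i, ∃ L, r.head = some L ∧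
      r' = Rule.mk (some (Lit.pos (ExtAtom.rej i r)))
             ((liftLit '' r.prem) ∪ {idxLit (i+1) L.compl}) (liftLit '' r.nbody)) ∨
    (∃ L, OccursIn m Pq L ∧
      ((∃ i, i + 1 < m ∧ r' = Rule.mk (some (idxLit i L)) {idxLit (i+1) L} ∅) ∨
        r' = Rule.mk (some (liftLit L)) {idxLit 0 L} ∅)) := by
  rcases h with ((h | h) | h) | h
  · exact Or.inl h
  · exact Or.inr (Or.inl h)
  · exact Or.inr (Or.inr (Or.inl h))
  · exact Or.inr (Or.inr (Or.inr h))

/-! ### Reduct membership -/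

lemma mem_reduct {β : Type} {Pr : Set (Rule β)} {S : Set (Lit β)} {r : Rule β}
    (hr : r ∈ Pr) (hd : ¬ Defeated S r) :
    (Rule.mk r.head r.prem ∅ : Rule β) ∈ Reduct Pr S :=
  ⟨r, hr, hd, rfl⟩

lemma not_defeated_empty {β : Type} {S : Set (Lit β)} {h : Option (Lit β)}
    {pr : Set (Lit β)} : ¬ Defeated S (Rule.mk h pr ∅) := by
  rintro ⟨L, hL, -⟩; exact hL

end C4aux
namespace C4aux

variable {α : Type}

/-! ### Inertia chains -/

lemma chain_step {m : ℕ} {Pq : ℕ → Set (Rule α)} {V W : Set (Lit (ExtAtom α))}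
    (hW : IsModel W (Reduct (UpdProgram m Pq) V)) {M : Lit α}
    (hocc : OccursIn m Pq M) {i : ℕ} (hi : i + 1 < m)
    (h : idxLit (i+1) M ∈ W) : idxLit i M ∈ W := by
  have hrule := mem_reduct (S := V) (mem_upd_inertia hocc hi) not_defeated_empty
  have := hW _ hrule ⟨by intro x hx; rcases hx with rfl; exact h, by rintro L hL; cases hL⟩
  rcases this with ⟨h', hh', hmem⟩
  obtain rfl : idxLit i M = h' := by exact Option.some.inj hh'
  exact hmem

lemma chain_down {m : ℕ} {Pq : ℕ → Set (Rule α)} {V W : Set (Lit (ExtAtom α))}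
    (hW : IsModel W (Reduct (UpdProgram m Pq) V)) {M : Lit α}
    (hocc : OccursIn m Pq M) :
    ∀ k, k < m → idxLit k M ∈ W → ∀ j, j ≤ k → idxLit j M ∈ W := by
  intro k
  induction k with
  | zero =>
      intro _ h j hj
      have hj0 : j = 0 := Nat.le_zero.mp hj
      rw [hj0]
      exact h
  | succ k ih =>
      intro hk h j hj
      rcases Nat.eq_or_lt_of_le hj with rfl | hj'
      · exact h
      · exact ih (by omega) (chain_step hW hocc (by omega) h) j (by omega)

lemma chain_base {m : ℕ} {Pq : ℕ → Set (Rule α)} {V W : Set (Lit (ExtAtom α))}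
    (hW : IsModel W (Reduct (UpdProgram m Pq) V)) {M : Lit α}
    (hocc : OccursIn m Pq M) (h : idxLit 0 M ∈ W) : liftLit M ∈ W := by
  have hrule := mem_reduct (S := V) (mem_upd_base hocc) not_defeated_empty
  have := hW _ hrule ⟨by intro x hx; rcases hx with rfl; exact h, by rintro L hL; cases hL⟩
  rcases this with ⟨h', hh', hmem⟩
  obtain rfl : liftLit M = h' := Option.some.inj hh'
  exact hmem

/-! ### No junk in answer sets of update programs -/

lemma no_junk {m : ℕ} {Pq : ℕ → Set (Rule α)} {S' : Set (Lit (ExtAtom α))}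
    (hAS : IsAnswerSet (UpdProgram m Pq) S') :
    (∀ j (M : Lit α), idxLit j M ∈ S' → j < m ∧ OccursIn m Pq M) ∧
    (∀ i (r : Rule α), Lit.pos (ExtAtom.rej i r) ∈ S' → i + 1 < m) ∧
    (∀ i (r : Rule α), Lit.neg (ExtAtom.rej i r) ∉ S') := by
  classical
  set J : Set (Lit (ExtAtom α)) :=
    {l | (∃ j M, l = idxLit j M ∧ ¬ (j < m ∧ OccursIn m Pq M)) ∨
         (∃ i r, l = Lit.pos (ExtAtom.rej i r) ∧ ¬ i + 1 < m) ∨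
         (∃ i r, l = Lit.neg (ExtAtom.rej i r))} with hJ
  have hkey : ∀ l ∈ S', l ∉ J := by
    have hsub : S' \ J ⊆ S' := Set.diff_subset
    have hmod : IsModel (S' \ J) (Reduct (UpdProgram m Pq) S') := by
      rintro rr ⟨r, hrP, hnd, rfl⟩ hbody
      have hbody' : BodyTrue S' (Rule.mk r.head r.prem ∅) :=
        ⟨fun x hx => (hbody.1 hx).1, by rintro L hL; cases hL⟩
      have hht := hAS.2.1 _ ⟨r, hrP, hnd, rfl⟩ hbody'
      rcases hht with ⟨h, hh, hmem⟩
      refine ⟨h, hh, hmem, ?_⟩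
      -- show the head is not junk
      rcases upd_cases hrP with h1 | h2 | h3 | h4
      · rcases h1 with ⟨i, hi, r0, hr0, hhead, rfl⟩
        simp at hh
      · rcases h2 with ⟨i, hi, r0, hr0, L, hhead, rfl⟩
        obtain rfl : idxLit i L = h := Option.some.inj hh
        rintro (⟨j, M, heq, hnj⟩ | ⟨i', r', heq, -⟩ | ⟨i', r', heq⟩)
        · obtain ⟨rfl, rfl⟩ := idx_eq_idx.mp heq
          exact hnj ⟨hi, i, hi, r0, hr0, Or.inl hhead⟩
        · exact idx_ne_posrej heq
        · exact idx_ne_negrej heq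
      · rcases h3 with ⟨i, hi, r0, hr0, L, hhead, rfl⟩
        obtain rfl : Lit.pos (ExtAtom.rej i r0) = h := Option.some.inj hh
        rintro (⟨j, M, heq, -⟩ | ⟨i', r', heq, hni⟩ | ⟨i', r', heq⟩)
        · exact idx_ne_posrej heq.symm
        · obtain ⟨rfl, rfl⟩ := posrej_eq_posrej.mp heq
          exact hni hi
        · cases heq
      · rcases h4 with ⟨L, hocc, ⟨i, hi, rfl⟩ | rfl⟩
        · obtain rfl : idxLit i L = h := Option.some.inj hh
          rintro (⟨j, M, heq, hnj⟩ | ⟨i', r', heq, -⟩ | ⟨i', r', heq⟩)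
          · obtain ⟨rfl, rfl⟩ := idx_eq_idx.mp heq
            exact hnj ⟨by omega, hocc⟩
          · exact idx_ne_posrej heq
          · exact idx_ne_negrej heq
        · obtain rfl : liftLit L = h := Option.some.inj hh
          rintro (⟨j, M, heq, -⟩ | ⟨i', r', heq, -⟩ | ⟨i', r', heq⟩)
          · exact lift_ne_idx heq
          · exact lift_ne_posrej heq
          · exact lift_ne_negrej heq
    have := hAS.2.2 _ hsub hmod
    intro l hl hlJ
    rw [← this] at hl
    exact hl.2 hlJ
  refine ⟨?_, ?_, ?_⟩
  · intro j M hmem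
    by_contra hc
    exact hkey _ hmem (Or.inl ⟨j, M, rfl, hc⟩)
  · intro i r hmem
    by_contra hc
    exact hkey _ hmem (Or.inr (Or.inl ⟨i, r, rfl, hc⟩))
  · intro i r hmem
    exact hkey _ hmem (Or.inr (Or.inr ⟨i, r, rfl⟩))

lemma idx_to_base {m : ℕ} {Pq : ℕ → Set (Rule α)} {S' : Set (Lit (ExtAtom α))}
    (hAS : IsAnswerSet (UpdProgram m Pq) S') {j : ℕ} {M : Lit α}
    (h : idxLit j M ∈ S') : liftLit M ∈ S' := by
  obtain ⟨hj, hocc⟩ := (no_junk hAS).1 j M h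
  exact chain_base hAS.2.1 hocc (chain_down hAS.2.1 hocc j hj h 0 (Nat.zero_le _))

end C4aux
namespace C4aux

variable {α : Type}

/-! ### The constructed answer set for the extended sequence -/

def RejQ (n : ℕ) (S : Set (Lit α)) (S' : Set (Lit (ExtAtom α))) (r : Rule α) : Prop :=
  ∃ L, r.head = some L ∧ r.prem ⊆ S ∧ ¬ Defeated S r ∧ idxLit n L.compl ∈ S'

def AA (n : ℕ) (P' : Set (Rule α)) (S : Set (Lit α)) (S' : Set (Lit (ExtAtom α))) :
    Set (Lit α) :=
  {M | ∃ r ∈ P', r.head = some M ∧ r.prem ⊆ S ∧ ¬ Defeated S r ∧ ¬ RejQ n S S' r}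

def SS (n : ℕ) (P' : Set (Rule α)) (S : Set (Lit α)) (S' : Set (Lit (ExtAtom α))) :
    Set (Lit (ExtAtom α)) :=
  {l | (∃ L, l = liftLit L ∧ L ∈ S) ∨
       (∃ j M, j ≤ n ∧ l = idxLit j M ∧ (idxLit j M ∈ S' ∨ M ∈ AA n P' S S')) ∨
       (∃ M, l = idxLit (n+1) M ∧ idxLit n M ∈ S') ∨
       (∃ i r, i < n ∧ l = Lit.pos (ExtAtom.rej i r) ∧ Lit.pos (ExtAtom.rej i r) ∈ S') ∨
       (∃ r, r ∈ P' ∧ l = Lit.pos (ExtAtom.rej n r) ∧ RejQ n S S' r)}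

variable {n : ℕ} {P' : Set (Rule α)} {S : Set (Lit α)} {S' : Set (Lit (ExtAtom α))}

lemma mem_SS_lift {L : Lit α} : liftLit L ∈ SS n P' S S' ↔ L ∈ S := by
  constructor
  · rintro (⟨L', heq, hmem⟩ | ⟨j, M, hj, heq, _⟩ | ⟨M, heq, _⟩ |
      ⟨i, r, _, heq, _⟩ | ⟨r, _, heq, _⟩)
    · rwa [lift_eq_lift.mp heq]
    · exact absurd heq lift_ne_idx
    · exact absurd heq lift_ne_idx
    · exact absurd heq lift_ne_posrej
    · exact absurd heq lift_ne_posrej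
  · intro h; exact Or.inl ⟨L, rfl, h⟩

lemma mem_SS_idx {j : ℕ} {M : Lit α} (hj : j ≤ n) :
    idxLit j M ∈ SS n P' S S' ↔ (idxLit j M ∈ S' ∨ M ∈ AA n P' S S') := by
  constructor
  · rintro (⟨L', heq, _⟩ | ⟨j', M', hj', heq, hmem⟩ | ⟨M', heq, hmem⟩ |
      ⟨i, r, _, heq, _⟩ | ⟨r, _, heq, _⟩)
    · exact absurd heq.symm lift_ne_idx
    · obtain ⟨rfl, rfl⟩ := idx_eq_idx.mp heq; exact hmem
    · obtain ⟨h1, -⟩ := idx_eq_idx.mp heq; omega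
    · exact absurd heq idx_ne_posrej
    · exact absurd heq idx_ne_posrej
  · intro h; exact Or.inr (Or.inl ⟨j, M, hj, rfl, h⟩)

lemma mem_SS_idxTop {M : Lit α} :
    idxLit (n+1) M ∈ SS n P' S S' ↔ idxLit n M ∈ S' := by
  constructor
  · rintro (⟨L', heq, _⟩ | ⟨j', M', hj', heq, hmem⟩ | ⟨M', heq, hmem⟩ |
      ⟨i, r, _, heq, _⟩ | ⟨r, _, heq, _⟩)
    · exact absurd heq.symm lift_ne_idx
    · obtain ⟨h1, -⟩ := idx_eq_idx.mp heq; omega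
    · obtain ⟨-, rfl⟩ := idx_eq_idx.mp heq; exact hmem
    · exact absurd heq idx_ne_posrej
    · exact absurd heq idx_ne_posrej
  · intro h; exact Or.inr (Or.inr (Or.inl ⟨M, rfl, h⟩))

lemma mem_SS_posrej {i : ℕ} {r : Rule α} :
    Lit.pos (ExtAtom.rej i r) ∈ SS n P' S S' ↔
      ((i < n ∧ Lit.pos (ExtAtom.rej i r) ∈ S') ∨
        (i = n ∧ r ∈ P' ∧ RejQ n S S' r)) := by
  constructor
  · rintro (⟨L', heq, _⟩ | ⟨j', M', hj', heq, _⟩ | ⟨M', heq, _⟩ |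
      ⟨i', r', hi', heq, hmem⟩ | ⟨r', hr', heq, hmem⟩)
    · exact absurd heq.symm lift_ne_posrej
    · exact absurd heq.symm idx_ne_posrej
    · exact absurd heq.symm idx_ne_posrej
    · obtain ⟨rfl, rfl⟩ := posrej_eq_posrej.mp heq; exact Or.inl ⟨hi', hmem⟩
    · obtain ⟨rfl, rfl⟩ := posrej_eq_posrej.mp heq; exact Or.inr ⟨rfl, hr', hmem⟩
  · rintro (⟨hi, hmem⟩ | ⟨rfl, hr, hmem⟩)
    · exact Or.inr (Or.inr (Or.inr (Or.inl ⟨i, r, hi, rfl, hmem⟩)))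
    · exact Or.inr (Or.inr (Or.inr (Or.inr ⟨r, hr, rfl, hmem⟩)))

lemma mem_SS_negrej {i : ℕ} {r : Rule α} :
    Lit.neg (ExtAtom.rej i r) ∉ SS n P' S S' := by
  rintro (⟨L', heq, _⟩ | ⟨j', M', hj', heq, _⟩ | ⟨M', heq, _⟩ |
    ⟨i', r', _, heq, _⟩ | ⟨r', _, heq, _⟩)
  · exact lift_ne_negrej heq.symm
  · exact idx_ne_negrej heq.symm
  · exact idx_ne_negrej heq.symm
  · cases heq
  · cases heq

/-! ### Sequence bookkeeping -/

lemma occurs_mono {Pseq : ℕ → Set (Rule α)} {P : Set (Rule α)} {L : Lit α}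
    (h : OccursIn (n+1) (append1 n Pseq P) L) :
    OccursIn (n+2) (append2 n Pseq P' P) L := by
  obtain ⟨i, hi, r, hr, hocc⟩ := h
  by_cases hin : i < n
  · refine ⟨i, by omega, r, ?_, hocc⟩
    simpa [append2, hin] using (by simpa [append1, hin] using hr)
  · have hin' : i = n := by omega
    rw [hin'] at hr
    refine ⟨n + 1, by omega, r, ?_, hocc⟩
    have : r ∈ P := by simpa [append1] using hr
    simpa [append2] using this

lemma mem_append2_lt {Pseq : ℕ → Set (Rule α)} {P : Set (Rule α)} {i : ℕ}
    (hi : i < n) {r : Rule α} :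
    r ∈ append2 n Pseq P' P i ↔ r ∈ Pseq i := by simp [append2, hi]

lemma mem_append2_n {Pseq : ℕ → Set (Rule α)} {P : Set (Rule α)} {r : Rule α} :
    r ∈ append2 n Pseq P' P n ↔ r ∈ P' := by simp [append2]

lemma mem_append2_top {Pseq : ℕ → Set (Rule α)} {P : Set (Rule α)} {r : Rule α} :
    r ∈ append2 n Pseq P' P (n+1) ↔ r ∈ P := by simp [append2]

lemma mem_append1_lt {Pseq : ℕ → Set (Rule α)} {P : Set (Rule α)} {i : ℕ}
    (hi : i < n) {r : Rule α} :
    r ∈ append1 n Pseq P i ↔ r ∈ Pseq i := by simp [append1, hi]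

lemma mem_append1_n {Pseq : ℕ → Set (Rule α)} {P : Set (Rule α)} {r : Rule α} :
    r ∈ append1 n Pseq P n ↔ r ∈ P := by simp [append1]

end C4aux
namespace C4aux

variable {α : Type}

/-! ### Reindexing map old extended alphabet → new extended alphabet -/

def stepAtom (n : ℕ) : ExtAtom α → ExtAtom α
  | .base a => .base a
  | .idx j a => if j < n then .idx j a else .idx (j+1) a
  | .rej i r => .rej i r

def stepLit (n : ℕ) : Lit (ExtAtom α) → Lit (ExtAtom α)
  | .pos a => .pos (stepAtom n a)
  | .neg a => .neg (stepAtom n a)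

lemma stepLit_lift {n : ℕ} {L : Lit α} : stepLit n (liftLit L) = liftLit L := by
  cases L <;> rfl

lemma stepLit_idx_lt {n j : ℕ} (hj : j < n) {M : Lit α} :
    stepLit n (idxLit j M) = idxLit j M := by
  cases M <;> simp [stepLit, stepAtom, idxLit, hj]

lemma stepLit_idx_ge {n j : ℕ} (hj : ¬ j < n) {M : Lit α} :
    stepLit n (idxLit j M) = idxLit (j+1) M := by
  cases M <;> simp [stepLit, stepAtom, idxLit, hj]

lemma stepLit_posrej {n i : ℕ} {r : Rule α} :
    stepLit n (Lit.pos (ExtAtom.rej i r)) = Lit.pos (ExtAtom.rej i r) := rfl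

end C4aux
/-- postulate C4: if an update answer set `S` of `(P⃗, P)`
satisfies every rule of `P'`, then `S` is also an update answer set of
`(P⃗, P', P)`. -/
theorem c4_holds {α : Type} (n : ℕ) (Pseq : ℕ → Set (Rule α))
    (P P' : Set (Rule α)) (S : Set (Lit α))
    (hS : UpdateAnswerSet (n + 1) (append1 n Pseq P) S)
    (hP' : ∀ r ∈ P', RuleTrue S r) :
    UpdateAnswerSet (n + 2) (append2 n Pseq P' P) S := by
  classical
  open C4aux in
  obtain ⟨S', hAS, hSeq⟩ := hS
  have hC' : Consistent S' := hAS.1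
  have hMod' : IsModel S' (Reduct (UpdProgram (n+1) (append1 n Pseq P)) S') := hAS.2.1
  have hMin' := hAS.2.2
  have hSm : ∀ L : Lit α, L ∈ S ↔ liftLit L ∈ S' := by
    intro L; rw [hSeq]; exact Iff.rfl
  obtain ⟨J1, J2, J3⟩ := no_junk hAS
  have hdown : ∀ (j : ℕ) (M : Lit α), idxLit j M ∈ S' → M ∈ S :=
    fun j M h => (hSm M).mpr (idx_to_base hAS h)
  have hConsS : Consistent S := by
    rintro a ⟨h1, h2⟩
    exact hC' (ExtAtom.base a) ⟨(hSm (Lit.pos a)).mp h1, (hSm (Lit.neg a)).mp h2⟩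
  have hAsub : AA n P' S S' ⊆ S := by
    rintro M ⟨r, hr, hh, hpr, hnd, -⟩
    obtain ⟨L', hL', hmem⟩ := hP' r hr ⟨hpr, fun L hL hLS => hnd ⟨L, hL, hLS⟩⟩
    rw [hh] at hL'
    cases hL'
    exact hmem
  have hidxSS : ∀ (j : ℕ) (M : Lit α), idxLit j M ∈ SS n P' S S' → M ∈ S := by
    rintro j M (⟨L', heq, _⟩ | ⟨j', M', hj', heq, hmem⟩ | ⟨M', heq, hmem⟩ |
      ⟨i, r, _, heq, _⟩ | ⟨r, _, heq, _⟩)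
    · exact absurd heq.symm lift_ne_idx
    · obtain ⟨rfl, rfl⟩ := idx_eq_idx.mp heq
      rcases hmem with h | h
      · exact hdown _ _ h
      · exact hAsub h
    · obtain ⟨-, rfl⟩ := idx_eq_idx.mp heq
      exact hdown _ _ hmem
    · exact absurd heq idx_ne_posrej
    · exact absurd heq idx_ne_posrej
  refine ⟨SS n P' S S', ⟨?_, ?_, ?_⟩, ?_⟩
  · -- Consistency
    rintro a ⟨h1, h2⟩
    cases a with
    | base x =>
        exact hConsS x ⟨(mem_SS_lift (L := Lit.pos x)).mp h1,
          (mem_SS_lift (L := Lit.neg x)).mp h2⟩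
    | idx j x =>
        exact hConsS x ⟨hidxSS j (Lit.pos x) h1, hidxSS j (Lit.neg x) h2⟩
    | rej i r => exact mem_SS_negrej h2
  · -- Model of the reduct
    rintro rr ⟨r2, hr2N, hnd2, rfl⟩ hbody
    rcases upd_cases hr2N with hcase | hcase | hcase | hcase
    · -- constraints
      obtain ⟨i, hi, r, hri, hhead, rfl⟩ := hcase
      exfalso
      have hprS : r.prem ⊆ S := by
        intro L hL
        exact mem_SS_lift.mp (hbody.1 ⟨L, hL, rfl⟩)
      have hndS : ¬ Defeated S r := by
        rintro ⟨L, hL, hLS⟩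
        exact hnd2 ⟨liftLit L, ⟨L, hL, rfl⟩, mem_SS_lift.mpr hLS⟩
      by_cases hin2 : i = n
      · subst i
        have hrP' : r ∈ P' := (mem_append2_n (n := n)).mp hri
        obtain ⟨L', hL', -⟩ := hP' r hrP' ⟨hprS, fun L hL hLS => hndS ⟨L, hL, hLS⟩⟩
        rw [hhead] at hL'
        cases hL'
      · -- r belongs to the old sequence
        have hold : ∃ i' < n + 1, r ∈ append1 n Pseq P i' := by
          by_cases hin : i < n
          · exact ⟨i, by omega, (mem_append1_lt hin).mpr ((mem_append2_lt hin).mp hri)⟩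
          · have hi1 : i = n + 1 := by omega
            rw [hi1] at hri
            exact ⟨n, by omega, mem_append1_n.mpr (mem_append2_top.mp hri)⟩
        obtain ⟨i', hi', hr'⟩ := hold
        have hndold : ¬ Defeated S' (Rule.mk none (liftLit '' r.prem) (liftLit '' r.nbody)) := by
          rintro ⟨l, ⟨L, hL, rfl⟩, hmem⟩
          exact hndS ⟨L, hL, (hSm L).mpr hmem⟩
        have := hMod' _ (mem_reduct (mem_upd_i hi' hr' hhead) hndold)
          ⟨by rintro x ⟨L', hL', rfl⟩; exact (hSm L').mp (hprS hL'), by rintro L hL; cases hL⟩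
        obtain ⟨h, hh, -⟩ := this
        cases hh
    · -- rules (ii)
      obtain ⟨i, hi, r, hri, L, hhead, rfl⟩ := hcase
      have hprS : r.prem ⊆ S := by
        intro L' hL'
        exact mem_SS_lift.mp (hbody.1 ⟨L', hL', rfl⟩)
      have hndS : ¬ Defeated S r := by
        rintro ⟨L', hL', hLS⟩
        exact hnd2 ⟨liftLit L', Set.mem_union_left _ ⟨L', hL', rfl⟩, mem_SS_lift.mpr hLS⟩
      have hnrej : Lit.pos (ExtAtom.rej i r) ∉ SS n P' S S' := by
        intro h
        exact hnd2 ⟨Lit.pos (ExtAtom.rej i r), Set.mem_union_right _ rfl, h⟩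
      refine ⟨idxLit i L, rfl, ?_⟩
      by_cases hin : i < n
      · -- old sequence, below n
        have hri' : r ∈ Pseq i := (mem_append2_lt hin).mp hri
        have hnrejS' : Lit.pos (ExtAtom.rej i r) ∉ S' := fun h =>
          hnrej (mem_SS_posrej.mpr (Or.inl ⟨hin, h⟩))
        have hndold : ¬ Defeated S'
            (Rule.mk (some (idxLit i L)) (liftLit '' r.prem)
              ((liftLit '' r.nbody) ∪ {Lit.pos (ExtAtom.rej i r)})) := by
          rintro ⟨l, hl | hl, hmem⟩
          · obtain ⟨L', hL', rfl⟩ := hl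
            exact hndS ⟨L', hL', (hSm L').mpr hmem⟩
          · rcases hl with rfl
            exact hnrejS' hmem
        have := hMod' _ (mem_reduct
            (mem_upd_ii (by omega) ((mem_append1_lt hin).mpr hri') hhead) hndold)
          ⟨by rintro x ⟨L', hL', rfl⟩; exact (hSm L').mp (hprS hL'), by rintro L' hL'; cases hL'⟩
        obtain ⟨h, hh, hmem⟩ := this
        cases hh
        exact (mem_SS_idx (by omega)).mpr (Or.inl hmem)
      · by_cases hin2 : i = n
        · -- the new program P'
          subst i
          have hrP' : r ∈ P' := mem_append2_n.mp hri
          have hnRejQ : ¬ RejQ n S S' r := fun h =>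
            hnrej (mem_SS_posrej.mpr (Or.inr ⟨rfl, hrP', h⟩))
          exact (mem_SS_idx (le_refl n)).mpr
            (Or.inr ⟨r, hrP', hhead, hprS, hndS, hnRejQ⟩)
        · -- the topmost program P
          have hi1 : i = n + 1 := by omega
          subst i
          have hrP : r ∈ P := mem_append2_top.mp hri
          have hnrejS' : Lit.pos (ExtAtom.rej n r) ∉ S' := fun h => by
            have := J2 n r h; omega
          have hndold : ¬ Defeated S'
              (Rule.mk (some (idxLit n L)) (liftLit '' r.prem)
                ((liftLit '' r.nbody) ∪ {Lit.pos (ExtAtom.rej n r)})) := by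
            rintro ⟨l, hl | hl, hmem⟩
            · obtain ⟨L', hL', rfl⟩ := hl
              exact hndS ⟨L', hL', (hSm L').mpr hmem⟩
            · rcases hl with rfl
              exact hnrejS' hmem
          have := hMod' _ (mem_reduct
              (mem_upd_ii (by omega) (mem_append1_n.mpr hrP) hhead) hndold)
            ⟨by rintro x ⟨L', hL', rfl⟩; exact (hSm L').mp (hprS hL'),
              by rintro L' hL'; cases hL'⟩
          obtain ⟨h, hh, hmem⟩ := this
          cases hh
          exact mem_SS_idxTop.mpr hmem
    · -- rejection rules (iii)
      obtain ⟨i, hi, r, hri, L, hhead, rfl⟩ := hcase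
      have hprS : r.prem ⊆ S := by
        intro L' hL'
        exact mem_SS_lift.mp (hbody.1 (Set.mem_union_left _ ⟨L', hL', rfl⟩))
      have hidxmem : idxLit (i+1) L.compl ∈ SS n P' S S' :=
        hbody.1 (Set.mem_union_right _ rfl)
      have hndS : ¬ Defeated S r := by
        rintro ⟨L', hL', hLS⟩
        exact hnd2 ⟨liftLit L', ⟨L', hL', rfl⟩, mem_SS_lift.mpr hLS⟩
      refine ⟨Lit.pos (ExtAtom.rej i r), rfl, ?_⟩
      by_cases hin : i < n
      · have hri' : r ∈ Pseq i := (mem_append2_lt hin).mp hri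
        rcases (mem_SS_idx (by omega)).mp hidxmem with hS'mem | hAmem
        · -- the rejecting literal was already there in the old answer set
          have hndold : ¬ Defeated S'
              (Rule.mk (some (Lit.pos (ExtAtom.rej i r)))
                ((liftLit '' r.prem) ∪ {idxLit (i+1) L.compl}) (liftLit '' r.nbody)) := by
            rintro ⟨l, ⟨L', hL', rfl⟩, hmem⟩
            exact hndS ⟨L', hL', (hSm L').mpr hmem⟩
          have := hMod' _ (mem_reduct
              (mem_upd_iii (by omega) ((mem_append1_lt hin).mpr hri') hhead) hndold)
            ⟨by rintro x (⟨L', hL', rfl⟩ | hx)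
                · exact (hSm L').mp (hprS hL')
                · rcases hx with rfl; exact hS'mem,
              by rintro L' hL'; cases hL'⟩
          obtain ⟨h, hh, hmem⟩ := this
          cases hh
          exact mem_SS_posrej.mpr (Or.inl ⟨hin, hmem⟩)
        · -- the rejecting literal comes from `P'`: impossible unless already rejected
          have hcomplS : L.compl ∈ S := hAsub hAmem
          by_cases hrej' : Lit.pos (ExtAtom.rej i r) ∈ S'
          · exact mem_SS_posrej.mpr (Or.inl ⟨hin, hrej'⟩)
          · exfalso
            have hndold : ¬ Defeated S'
                (Rule.mk (some (idxLit i L)) (liftLit '' r.prem)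
                  ((liftLit '' r.nbody) ∪ {Lit.pos (ExtAtom.rej i r)})) := by
              rintro ⟨l, hl | hl, hmem⟩
              · obtain ⟨L', hL', rfl⟩ := hl
                exact hndS ⟨L', hL', (hSm L').mpr hmem⟩
              · rcases hl with rfl
                exact hrej' hmem
            have := hMod' _ (mem_reduct
                (mem_upd_ii (by omega) ((mem_append1_lt hin).mpr hri') hhead) hndold)
              ⟨by rintro x ⟨L', hL', rfl⟩; exact (hSm L').mp (hprS hL'),
                by rintro L' hL'; cases hL'⟩
            obtain ⟨h, hh, hmem⟩ := this
            cases hh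
            exact consistent_pair hConsS (hdown _ _ hmem) hcomplS
      · -- i = n : rejection of a `P'` rule
        have hi1 : i = n := by omega
        subst i
        have hrP' : r ∈ P' := mem_append2_n.mp hri
        have hS'mem : idxLit n L.compl ∈ S' := mem_SS_idxTop.mp hidxmem
        exact mem_SS_posrej.mpr (Or.inr ⟨rfl, hrP', ⟨L, hhead, hprS, hndS, hS'mem⟩⟩)
    · -- inertia rules (iv)
      obtain ⟨L, hocc, ⟨i, hi, rfl⟩ | rfl⟩ := hcase
      · refine ⟨idxLit i L, rfl, ?_⟩
        have hmem : idxLit (i+1) L ∈ SS n P' S S' := hbody.1 rfl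
        by_cases hin : i + 1 ≤ n
        · rcases (mem_SS_idx hin).mp hmem with hS'mem | hAmem
          · have hoccold : OccursIn (n+1) (append1 n Pseq P) L := (J1 _ _ hS'mem).2
            exact (mem_SS_idx (by omega)).mpr
              (Or.inl (chain_step hMod' hoccold (by omega) hS'mem))
          · exact (mem_SS_idx (by omega)).mpr (Or.inr hAmem)
        · have hi1 : i = n := by omega
          subst i
          exact (mem_SS_idx (le_refl n)).mpr (Or.inl (mem_SS_idxTop.mp hmem))
      · refine ⟨liftLit L, rfl, ?_⟩
        have hmem : idxLit 0 L ∈ SS n P' S S' := hbody.1 rfl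
        rcases (mem_SS_idx (Nat.zero_le n)).mp hmem with hS'mem | hAmem
        · exact mem_SS_lift.mpr (hdown _ _ hS'mem)
        · exact mem_SS_lift.mpr (hAsub hAmem)
  · -- Minimality
    intro T hTsub hTmod
    set T' : Set (Lit (ExtAtom α)) := {l | l ∈ S' ∧ stepLit n l ∈ T} with hT'def
    have hT'sub : T' ⊆ S' := fun l hl => hl.1
    have hT'mod : IsModel T' (Reduct (UpdProgram (n+1) (append1 n Pseq P)) S') := by
      rintro rr ⟨r1, hr1Q, hnd1, rfl⟩ hbody
      have hbodyS' : BodyTrue S' (Rule.mk r1.head r1.prem ∅) :=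
        ⟨fun x hx => (hbody.1 hx).1, by rintro L hL; cases hL⟩
      have hheadS' := hMod' _ ⟨r1, hr1Q, hnd1, rfl⟩ hbodyS'
      rcases upd_cases hr1Q with hcase | hcase | hcase | hcase
      · obtain ⟨i, hi, r, hri, hhead, rfl⟩ := hcase
        obtain ⟨h, hh, -⟩ := hheadS'
        cases hh
      · -- rules (ii)
        obtain ⟨i, hi, r, hri, L, hhead, rfl⟩ := hcase
        obtain ⟨h, hh, hheadmem⟩ := hheadS'
        cases hh
        have hpremT : ∀ L' ∈ r.prem, liftLit L' ∈ T := by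
          intro L' hL'
          have := (hbody.1 ⟨L', hL', rfl⟩).2
          rwa [stepLit_lift] at this
        have hndS : ¬ Defeated S r := by
          rintro ⟨L', hL', hLS⟩
          exact hnd1 ⟨liftLit L', Set.mem_union_left _ ⟨L', hL', rfl⟩, (hSm L').mp hLS⟩
        have hnrejS' : Lit.pos (ExtAtom.rej i r) ∉ S' := fun h =>
          hnd1 ⟨_, Set.mem_union_right _ rfl, h⟩
        refine ⟨idxLit i L, rfl, ⟨hheadmem, ?_⟩⟩
        by_cases hin : i < n
        · rw [stepLit_idx_lt hin]
          have hndnew : ¬ Defeated (SS n P' S S')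
              (Rule.mk (some (idxLit i L)) (liftLit '' r.prem)
                ((liftLit '' r.nbody) ∪ {Lit.pos (ExtAtom.rej i r)})) := by
            rintro ⟨l, hl | hl, hmem⟩
            · obtain ⟨L', hL', rfl⟩ := hl
              exact hndS ⟨L', hL', mem_SS_lift.mp hmem⟩
            · rcases hl with rfl
              rcases mem_SS_posrej.mp hmem with ⟨-, hmem'⟩ | ⟨heq, -, -⟩
              · exact hnrejS' hmem'
              · omega
          have := hTmod _ (mem_reduct (mem_upd_ii (m := n+2) (by omega)
              ((mem_append2_lt hin).mpr ((mem_append1_lt hin).mp hri)) hhead) hndnew)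
            ⟨by rintro x ⟨L', hL', rfl⟩; exact hpremT L' hL',
              by rintro L' hL'; cases hL'⟩
          obtain ⟨h, hh, hmem⟩ := this
          cases hh
          exact hmem
        · rw [stepLit_idx_ge hin]
          have hieq : i = n := by omega
          subst i
          have hrP : r ∈ P := mem_append1_n.mp hri
          have hndnew : ¬ Defeated (SS n P' S S')
              (Rule.mk (some (idxLit (n+1) L)) (liftLit '' r.prem)
                ((liftLit '' r.nbody) ∪ {Lit.pos (ExtAtom.rej (n+1) r)})) := by
            rintro ⟨l, hl | hl, hmem⟩
            · obtain ⟨L', hL', rfl⟩ := hl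
              exact hndS ⟨L', hL', mem_SS_lift.mp hmem⟩
            · rcases hl with rfl
              rcases mem_SS_posrej.mp hmem with ⟨h1, -⟩ | ⟨h1, -, -⟩ <;> omega
          have := hTmod _ (mem_reduct (mem_upd_ii (m := n+2) (by omega)
              (mem_append2_top.mpr hrP) hhead) hndnew)
            ⟨by rintro x ⟨L', hL', rfl⟩; exact hpremT L' hL',
              by rintro L' hL'; cases hL'⟩
          obtain ⟨h, hh, hmem⟩ := this
          cases hh
          exact hmem
      · -- rejection rules (iii)
        obtain ⟨i, hi, r, hri, L, hhead, rfl⟩ := hcase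
        have hin : i < n := by omega
        obtain ⟨h, hh, hheadmem⟩ := hheadS'
        cases hh
        have hri' : r ∈ Pseq i := (mem_append1_lt hin).mp hri
        have hpremT : ∀ L' ∈ r.prem, liftLit L' ∈ T := by
          intro L' hL'
          have := (hbody.1 (Set.mem_union_left _ ⟨L', hL', rfl⟩)).2
          rwa [stepLit_lift] at this
        obtain ⟨hidxS', hidxstep⟩ := hbody.1 (Set.mem_union_right _ rfl)
        have hndS : ¬ Defeated S r := by
          rintro ⟨L', hL', hLS⟩
          exact hnd1 ⟨liftLit L', ⟨L', hL', rfl⟩, (hSm L').mp hLS⟩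
        have hoccC : OccursIn (n+2) (append2 n Pseq P' P) L.compl :=
          occurs_mono (P' := P') (J1 _ _ hidxS').2
        have hidxT : idxLit (i+1) L.compl ∈ T := by
          by_cases hin1 : i + 1 < n
          · rwa [stepLit_idx_lt hin1] at hidxstep
          · rw [stepLit_idx_ge hin1] at hidxstep
            exact chain_step hTmod hoccC (by omega) hidxstep
        have hndnew : ¬ Defeated (SS n P' S S')
            (Rule.mk (some (Lit.pos (ExtAtom.rej i r)))
              ((liftLit '' r.prem) ∪ {idxLit (i+1) L.compl}) (liftLit '' r.nbody)) := by
          rintro ⟨l, ⟨L', hL', rfl⟩, hmem⟩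
          exact hndS ⟨L', hL', mem_SS_lift.mp hmem⟩
        have := hTmod _ (mem_reduct (mem_upd_iii (m := n+2) (by omega)
            ((mem_append2_lt hin).mpr hri') hhead) hndnew)
          ⟨by rintro x (⟨L', hL', rfl⟩ | hx)
              · exact hpremT L' hL'
              · rcases hx with rfl; exact hidxT,
            by rintro L' hL'; cases hL'⟩
        obtain ⟨h, hh, hmem⟩ := this
        cases hh
        exact ⟨Lit.pos (ExtAtom.rej i r), rfl, ⟨hheadmem, hmem⟩⟩
      · -- inertia rules (iv)
        obtain ⟨L, hoccold, ⟨i, hi, rfl⟩ | rfl⟩ := hcase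
        · obtain ⟨h, hh, hheadmem⟩ := hheadS'
          cases hh
          obtain ⟨hidxS', hidxstep⟩ := hbody.1 rfl
          have hoccN := occurs_mono (P' := P') hoccold
          have hin : i < n := by omega
          refine ⟨idxLit i L, rfl, ⟨hheadmem, ?_⟩⟩
          rw [stepLit_idx_lt hin]
          by_cases hin1 : i + 1 < n
          · rw [stepLit_idx_lt hin1] at hidxstep
            exact chain_step hTmod hoccN (by omega) hidxstep
          · rw [stepLit_idx_ge hin1] at hidxstep
            exact chain_step hTmod hoccN (by omega)
              (chain_step hTmod hoccN (by omega) hidxstep)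
        · obtain ⟨h, hh, hheadmem⟩ := hheadS'
          cases hh
          obtain ⟨hidxS', hidxstep⟩ := hbody.1 rfl
          have hoccN := occurs_mono (P' := P') hoccold
          refine ⟨liftLit L, rfl, ⟨hheadmem, ?_⟩⟩
          rw [stepLit_lift]
          by_cases h0 : 0 < n
          · rw [stepLit_idx_lt h0] at hidxstep
            exact chain_base hTmod hoccN hidxstep
          · rw [stepLit_idx_ge h0] at hidxstep
            exact chain_base hTmod hoccN (chain_step hTmod hoccN (by omega) hidxstep)
    have hT'eq : T' = S' := hMin' T' hT'sub hT'mod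
    have hS'T : ∀ l, l ∈ S' → stepLit n l ∈ T := by
      intro l hl
      rw [← hT'eq] at hl
      exact hl.2
    refine Set.Subset.antisymm hTsub ?_
    rintro l (⟨L, rfl, hLS⟩ | ⟨j, M, hj, rfl, hmem⟩ | ⟨M, rfl, hmem⟩ |
      ⟨i, r, hi, rfl, hmem⟩ | ⟨r, hrP', rfl, hRejQ⟩)
    · have := hS'T _ ((hSm L).mp hLS)
      rwa [stepLit_lift] at this
    · rcases hmem with hS'mem | hAmem
      · have hstep := hS'T _ hS'mem
        by_cases hjn : j < n
        · rwa [stepLit_idx_lt hjn] at hstep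
        · have hjeq : j = n := by omega
          subst j
          rw [stepLit_idx_ge hjn] at hstep
          have hoccN := occurs_mono (P' := P') (J1 _ _ hS'mem).2
          exact chain_step hTmod hoccN (by omega) hstep
      · obtain ⟨r, hrP', hhead, hpr, hnd, hnRejQ⟩ := hAmem
        have hoccN : OccursIn (n+2) (append2 n Pseq P' P) M :=
          ⟨n, by omega, r, mem_append2_n.mpr hrP', Or.inl hhead⟩
        have hndnew : ¬ Defeated (SS n P' S S')
            (Rule.mk (some (idxLit n M)) (liftLit '' r.prem)
              ((liftLit '' r.nbody) ∪ {Lit.pos (ExtAtom.rej n r)})) := by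
          rintro ⟨l', hl' | hl', hmem'⟩
          · obtain ⟨L', hL', rfl⟩ := hl'
            exact hnd ⟨L', hL', mem_SS_lift.mp hmem'⟩
          · rcases hl' with rfl
            rcases mem_SS_posrej.mp hmem' with ⟨h1, -⟩ | ⟨-, -, h2⟩
            · omega
            · exact hnRejQ h2
        have := hTmod _ (mem_reduct (mem_upd_ii (m := n+2) (by omega)
            (mem_append2_n.mpr hrP') hhead) hndnew)
          ⟨by rintro x ⟨L', hL', rfl⟩
              have := hS'T _ ((hSm L').mp (hpr hL'))
              rwa [stepLit_lift] at this,
            by rintro L' hL'; cases hL'⟩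
        obtain ⟨h, hh, hmemT⟩ := this
        cases hh
        exact chain_down hTmod hoccN n (by omega) hmemT j hj
    · have hstep := hS'T _ hmem
      rwa [stepLit_idx_ge (by omega)] at hstep
    · exact hS'T _ hmem
    · obtain ⟨L, hhead, hpr, hnd, hidx⟩ := hRejQ
      have hndnew : ¬ Defeated (SS n P' S S')
          (Rule.mk (some (Lit.pos (ExtAtom.rej n r)))
            ((liftLit '' r.prem) ∪ {idxLit (n+1) L.compl}) (liftLit '' r.nbody)) := by
        rintro ⟨l', ⟨L', hL', rfl⟩, hmem'⟩
        exact hnd ⟨L', hL', mem_SS_lift.mp hmem'⟩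
      have hidxT : idxLit (n+1) L.compl ∈ T := by
        have := hS'T _ hidx
        rwa [stepLit_idx_ge (by omega)] at this
      have := hTmod _ (mem_reduct (mem_upd_iii (m := n+2) (by omega)
          (mem_append2_n.mpr hrP') hhead) hndnew)
        ⟨by rintro x (⟨L', hL', rfl⟩ | hx)
            · have := hS'T _ ((hSm L').mp (hpr hL'))
              rwa [stepLit_lift] at this
            · rcases hx with rfl; exact hidxT,
          by rintro L' hL'; cases hL'⟩
      obtain ⟨h, hh, hmemT⟩ := this
      cases hh
      exact hmemT
  · -- Restriction to base literals
    exact Set.ext fun L => Iff.symm mem_SS_lift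
end
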